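/- Let ((V,E), f) be a signal over a finite connected graph and 𝔗 a BHT of it. Let V_ε = {v₁, …, v_m} be the set of vertices v with pers(v) = f(𝔏(v)) − f(v) < ε. For a function g : V → ℝ and v ∈ V, define g_v(u) = g(𝔏(v)) if v ⪯_T u, and g_v(u) = g(u) otherwise. Then the low persistence filter satisfies 𝓛₀^ε f = (⋯((f_{v₁})_{v₂})⋯)_{v_m}, and this composite is independent of the order in which the vertices of V_ε are processed. -/

import Mathlib

/-!
The BHT is the merge tree of the sublevel filtration `G_{<k}`: the component of a vertex `v ≠ r`
lives until its death edge `e`, where it merges into the component of `p v`, and `L v` is the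
higher endpoint of `e`. Hence `f (L v)` increases with the death time, which increases towards the
root. Write `𝓛^T f (u)` for the maximum of `f u` and of the values `f (L w)` over the ancestors
`w ∈ T` of `u`. Filling the basin of `v` in `𝓛^T f` gives `𝓛^{T ∪ {v}} f`: on a descendant `u`
of `v`, an ancestor `w ∈ T` of `L v` either dies no later than `v`, so `f (L w) ≤ f (L v)`, or is
still alive when `L v` joins the component of `p v`, so it is an ancestor of `p v`, hence of `u`.
Folding along any enumeration of `V_ε` therefore yields `𝓛^{V_ε} f = 𝓛₀^ε f`.
-/

open scoped Classical

/-- A (multi)graph given by source and target maps on an edge type. -/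
structure SigGraph (V E : Type*) where
  src : E → V
  tgt : E → V

namespace SigGraph

variable {V E : Type*} (G : SigGraph V E)

/-- `e` is an edge joining `x` and `y`. -/
def Ends (e : E) (x y : V) : Prop :=
  (G.src e = x ∧ G.tgt e = y) ∨ (G.src e = y ∧ G.tgt e = x)

/-- The graph is connected. -/
def Connected : Prop :=
  ∀ a b : V, Relation.ReflTransGen (fun x y => ∃ e, G.Ends e x y) a b

/-- Extension of a vertex signal to vertices and edges, `f(e) = max f(V(e))`. -/
def sig (f : V → ℝ) : V ⊕ E → ℝ
  | .inl v => f v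
  | .inr e => max (f (G.src e)) (f (G.tgt e))

/-- `pos` realizes a `G`-ordering: a total ordering of `V ⊕ E` along which the
signal is nondecreasing and every vertex precedes each edge incident to it. -/
def IsGOrdering (f : V → ℝ) (pos : V ⊕ E → ℕ) : Prop :=
  Function.Injective pos ∧
  (∀ a b, pos a ≤ pos b → G.sig f a ≤ G.sig f b) ∧
  (∀ e : E, pos (.inl (G.src e)) < pos (.inr e) ∧ pos (.inl (G.tgt e)) < pos (.inr e))

/-- Connectivity within the subgraph `G_{<k}` of elements with position `< k`. -/
def ConnB (pos : V ⊕ E → ℕ) (k : ℕ) (a b : V) : Prop :=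
  pos (.inl a) < k ∧ pos (.inl b) < k ∧
    Relation.ReflTransGen (fun x y => ∃ e, pos (.inr e) < k ∧ G.Ends e x y) a b

/-- `m` is the `≺`-minimum of the connected component of `v` in `G_{<k}`. -/
def IsCompMin (pos : V ⊕ E → ℕ) (k : ℕ) (m v : V) : Prop :=
  G.ConnB pos k m v ∧ ∀ w, G.ConnB pos k v w → pos (.inl m) ≤ pos (.inl w)

/-- The `≺`-maximal endpoint of an edge. -/
def maxEnd (pos : V ⊕ E → ℕ) (e : E) : V :=
  if pos (.inl (G.src e)) ≤ pos (.inl (G.tgt e)) then G.tgt e else G.src e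

/-- `(p, L)` is a basin hierarchy tree of the signal `(G, f)` with respect to the
`G`-ordering `pos`, rooted at the `≺`-minimal vertex `r`, with linking-vertex map `L`. -/
structure IsBHT (f : V → ℝ) (pos : V ⊕ E → ℕ) (r : V) (p : V → V) (L : V → V) : Prop where
  ordering : G.IsGOrdering f pos
  root_min : ∀ v, pos (.inl r) ≤ pos (.inl v)
  root_fix : p r = r
  reaches : ∀ v, ∃ n, p^[n] v = r
  spec : ∀ v, v ≠ r → ∃ e : E,
    G.IsCompMin pos (pos (.inr e)) v v ∧
    G.IsCompMin pos (pos (.inr e) + 1) (p v) v ∧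
    L v = G.maxEnd pos e

end SigGraph

/-- `u` is an ancestor of `v` in the tree with parent map `p` (`u ⪯_T v`). -/
def Anc {V : Type*} (p : V → V) (u v : V) : Prop := ∃ n, p^[n] v = u

/-- `f(𝔏(v))`, with value `+∞` at the root. -/
noncomputable def fLink {V : Type*} (f : V → ℝ) (r : V) (L : V → V) (v : V) : EReal :=
  if v = r then ⊤ else (f (L v) : EReal)

/-- The persistence `pers(v) = f(𝔏(v)) - f(v)` of a vertex in a BHT. -/
noncomputable def persBHT {V : Type*} (f : V → ℝ) (r : V) (L : V → V) (v : V) : EReal :=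
  fLink f r L v - (f v : EReal)

namespace SigGraph

variable {V E : Type*} (G : SigGraph V E)

/-- The component of `v` dies at the edge `e`: `v` is the minimum of its component
just before `e` is added, and no longer after. -/
def DiesAt (pos : V ⊕ E → ℕ) (v : V) (e : E) : Prop :=
  G.IsCompMin pos (pos (.inr e)) v v ∧ ¬ G.IsCompMin pos (pos (.inr e) + 1) v v

/-- The death value of the component created by `v` (`+∞` if permanent). -/
noncomputable def deathVal (f : V → ℝ) (pos : V ⊕ E → ℕ) (v : V) : EReal :=
  if h : ∃ e, G.DiesAt pos v e then ((G.sig f (.inr h.choose) : ℝ) : EReal) else ⊤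

/-- The degree-0 persistence diagram of `(G, f)`, as a multiset of intervals
`[birth, death)` (including trivial intervals). -/
noncomputable def PD0 [Fintype V] (f : V → ℝ) (pos : V ⊕ E → ℕ) : Multiset (EReal × EReal) :=
  Finset.univ.val.map fun v : V => ((f v : EReal), G.deathVal f pos v)

end SigGraph

/-- The nontrivial part of a multiset of intervals. -/
noncomputable def nontriv (M : Multiset (EReal × EReal)) : Multiset (EReal × EReal) :=
  M.filter fun ab => ab.1 < ab.2

/-- The 0-low-persistence filter associated to a BHT `(p, L)` rooted at `r`. -/
noncomputable def LPF {V : Type*} [Fintype V] (f : V → ℝ) (r : V) (p L : V → V)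
    (ε : ℝ) (v : V) : ℝ :=
  (insert (f v) ((Finset.univ.filter fun u => Anc p u v ∧ persBHT f r L u < (ε : EReal)).image
    fun u => f (L u))).max' (Finset.insert_nonempty _ _)

/-- The basin-filling operation `g ↦ g_v`: all descendants of `v` in the BHT are
raised to the value `g(𝔏(v))`. -/
noncomputable def fill {V : Type*} (p L : V → V) (g : V → ℝ) (v : V) : V → ℝ :=
  fun u => if Anc p v u then g (L v) else g u

open Finset Relation

namespace Anc

variable {V : Type*} {p : V → V} {a b c : V}

theorem refl (p : V → V) (a : V) : Anc p a a := ⟨0, rfl⟩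

theorem trans (hab : Anc p a b) (hbc : Anc p b c) : Anc p a c := by
  obtain ⟨n, rfl⟩ := hab
  obtain ⟨m, rfl⟩ := hbc
  exact ⟨n + m, Function.iterate_add_apply p n m c⟩

theorem parent (p : V → V) (a : V) : Anc p (p a) a := ⟨1, rfl⟩

theorem anc_parent_of_ne (h : Anc p a b) (hne : a ≠ b) : Anc p a (p b) := by
  obtain ⟨_ | n, rfl⟩ := h
  · exact absurd rfl hne
  · exact ⟨n, rfl⟩

theorem total_of_anc (hac : Anc p a c) (hbc : Anc p b c) : Anc p a b ∨ Anc p b a := by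
  obtain ⟨n, rfl⟩ := hac
  obtain ⟨m, rfl⟩ := hbc
  rcases le_total n m with h | h
  · exact .inr ⟨m - n, by rw [← Function.iterate_add_apply, Nat.sub_add_cancel h]⟩
  · exact .inl ⟨n - m, by rw [← Function.iterate_add_apply, Nat.sub_add_cancel h]⟩

theorem le_of_map_parent_le {α : Type*} [Preorder α] {g : V → α} (hg : ∀ x, g (p x) ≤ g x)
    (h : Anc p a b) : g a ≤ g b := by
  obtain ⟨n, rfl⟩ := h
  induction n generalizing b with
  | zero => exact le_rfl
  | succ n ih => exact (ih (b := p b)).trans (hg b)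

theorem eq_of_anc_fixed (hp : p b = b) (h : Anc p a b) : a = b := by
  obtain ⟨n, rfl⟩ := h
  exact Function.iterate_fixed hp n

theorem induction_from_root {r : V} (hroot : ∀ v, Anc p r v) {P : V → Prop}
    (step : ∀ v, (v ≠ r → P (p v)) → P v) (v : V) : P v := by
  obtain ⟨n, hn⟩ := hroot v
  induction n generalizing v with
  | zero => exact step v fun hv => absurd hn hv
  | succ n ih => exact step v fun _ => ih (p v) hn

end Anc

namespace SigGraph

variable {V E : Type*} {G : SigGraph V E} {pos : V ⊕ E → ℕ} {k : ℕ} {a b c m x : V}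

/-- Adjacency in `G_{<k}`; the path part of `ConnB` is its reflexive-transitive closure. -/
def AdjB (G : SigGraph V E) (pos : V ⊕ E → ℕ) (k : ℕ) (x y : V) : Prop :=
  ∃ e, pos (.inr e) < k ∧ G.Ends e x y

theorem connB_refl (h : pos (.inl a) < k) : G.ConnB pos k a a := ⟨h, h, .refl⟩

theorem ConnB.symm (h : G.ConnB pos k a b) : G.ConnB pos k b a :=
  ⟨h.2.1, h.1, reflTransGen_swap.mp (ReflTransGen.mono (fun _ _ ⟨e, he, hxy⟩ => ⟨e, he, hxy.symm⟩) _ _ h.2.2)⟩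

theorem ConnB.trans (hab : G.ConnB pos k a b) (hbc : G.ConnB pos k b c) : G.ConnB pos k a c :=
  ⟨hab.1, hbc.2.1, hab.2.2.trans hbc.2.2⟩

theorem ConnB.mono {k' : ℕ} (hk : k ≤ k') (h : G.ConnB pos k a b) : G.ConnB pos k' a b :=
  ⟨h.1.trans_le hk, h.2.1.trans_le hk,
    ReflTransGen.mono (fun _ _ ⟨e, he, hxy⟩ => ⟨e, he.trans_le hk, hxy⟩) _ _ h.2.2⟩

theorem IsCompMin.eq (hpos : Function.Injective pos) {m' : V} (h : G.IsCompMin pos k m x)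
    (h' : G.IsCompMin pos k m' x) : m = m' :=
  Sum.inl_injective (hpos (le_antisymm (h.2 m' h'.1.symm) (h'.2 m h.1.symm)))

theorem IsCompMin.of_connB (h : G.IsCompMin pos k m a) (hab : G.ConnB pos k a b) :
    G.IsCompMin pos k m b :=
  ⟨h.1.trans hab, fun w hw => h.2 w (hab.trans hw)⟩

theorem IsCompMin.self (h : G.IsCompMin pos k m x) : G.IsCompMin pos k m m :=
  h.of_connB h.1.symm

theorem IsCompMin.of_le {K : ℕ} (hk : k ≤ K) (hx : pos (.inl x) < k)
    (h : G.IsCompMin pos K x x) : G.IsCompMin pos k x x :=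
  ⟨connB_refl hx, fun w hw => h.2 w (hw.mono hk)⟩

theorem reflTransGen_adjB_succ (hpos : Function.Injective pos) {e : E} (he : pos (.inr e) = k)
    (h : ReflTransGen (G.AdjB pos (k + 1)) a b) :
    ReflTransGen (G.AdjB pos k) a b ∨ ReflTransGen (G.AdjB pos (k + 1)) a (G.src e) := by
  induction h with
  | refl => exact .inl .refl
  | @tail b c _ hbc ih =>
    obtain ⟨e', he', hends⟩ := hbc
    rcases eq_or_ne e' e with rfl | hne
    · refine .inr (ih.elim (fun h => ?_) id)
      have hab : ReflTransGen (G.AdjB pos (k + 1)) a b :=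
        ReflTransGen.mono (fun _ _ ⟨e'', h'', hxy⟩ => ⟨e'', h''.trans (Nat.lt_succ_self k), hxy⟩) _ _ h
      rcases hends with ⟨hsrc, _⟩ | ⟨hsrc, htgt⟩
      · exact hsrc ▸ hab
      · exact hab.tail ⟨e', he', .inr ⟨rfl, htgt⟩⟩
    · have hlt : pos (.inr e') < k :=
        lt_of_le_of_ne (Nat.lt_succ_iff.mp he') fun h =>
          hne (Sum.inr_injective (hpos (h.trans he.symm)))
      exact ih.imp (·.tail ⟨e', hlt, hends⟩) id

end SigGraph

namespace SigGraph.IsBHT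

variable {V E : Type*} {G : SigGraph V E} {f : V → ℝ} {pos : V ⊕ E → ℕ} {r : V} {p L : V → V}
  {k : ℕ} {m u v w x : V}

theorem ne_root_of_anc (hbht : G.IsBHT f pos r p L) (h : Anc p v u) (hv : v ≠ r) : u ≠ r :=
  fun hu => hv ((hu ▸ h).eq_of_anc_fixed hbht.root_fix)

theorem parent_ne (hbht : G.IsBHT f pos r p L) (hv : v ≠ r) : p v ≠ v := fun h =>
  hv (Anc.eq_of_anc_fixed h (hbht.reaches v)).symm

theorem isCompMin_root (hbht : G.IsBHT f pos r p L) (h : pos (.inl r) < k) :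
    G.IsCompMin pos k r r :=
  ⟨connB_refl h, fun w _ => hbht.root_min w⟩

/-- The position of the edge at which the component of `v` merges into that of `p v`
(junk value `0` at the root, whose component never dies). -/
noncomputable def deathTime (hbht : G.IsBHT f pos r p L) (v : V) : ℕ :=
  if hv : v = r then 0 else pos (.inr (hbht.spec v hv).choose)

theorem exists_deathEdge (hbht : G.IsBHT f pos r p L) (hv : v ≠ r) :
    ∃ e : E, pos (.inr e) = hbht.deathTime v ∧ G.IsCompMin pos (hbht.deathTime v) v v ∧
      G.IsCompMin pos (hbht.deathTime v + 1) (p v) v ∧ L v = G.maxEnd pos e := by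
  obtain ⟨h₁, h₂, h₃⟩ := (hbht.spec v hv).choose_spec
  simp only [deathTime, dif_neg hv]
  exact ⟨_, rfl, h₁, h₂, h₃⟩

theorem pos_lt_deathTime (hbht : G.IsBHT f pos r p L) (hv : v ≠ r) :
    pos (.inl v) < hbht.deathTime v :=
  (hbht.exists_deathEdge hv).choose_spec.2.1.1.1

theorem not_isCompMin_deathTime_succ (hbht : G.IsBHT f pos r p L) (hv : v ≠ r) :
    ¬ G.IsCompMin pos (hbht.deathTime v + 1) v v := fun h =>
  hbht.parent_ne hv ((hbht.exists_deathEdge hv).choose_spec.2.2.1.eq hbht.ordering.1 h)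

theorem isCompMin_self_iff (hbht : G.IsBHT f pos r p L) (hv : v ≠ r) (hk : pos (.inl v) < k) :
    G.IsCompMin pos k v v ↔ k ≤ hbht.deathTime v := by
  refine ⟨fun h => ?_, fun hk' => (hbht.exists_deathEdge hv).choose_spec.2.1.of_le hk' hk⟩
  by_contra! hlt
  exact hbht.not_isCompMin_deathTime_succ hv
    (h.of_le hlt ((hbht.pos_lt_deathTime hv).trans (Nat.lt_succ_self _)))

theorem pos_parent_le (hbht : G.IsBHT f pos r p L) (v : V) : pos (.inl (p v)) ≤ pos (.inl v) := by
  rcases eq_or_ne v r with rfl | hv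
  · rw [hbht.root_fix]
  · obtain ⟨_, _, _, hpv, _⟩ := hbht.exists_deathEdge hv
    exact hpv.2 v (connB_refl ((hbht.pos_lt_deathTime hv).trans (Nat.lt_succ_self _)))

theorem pos_le_of_anc (hbht : G.IsBHT f pos r p L) (h : Anc p w v) :
    pos (.inl w) ≤ pos (.inl v) :=
  h.le_of_map_parent_le (g := fun x => pos (.inl x)) hbht.pos_parent_le

theorem deathTime_lt_parent (hbht : G.IsBHT f pos r p L) (hv : v ≠ r) (hpv : p v ≠ r) :
    hbht.deathTime v < hbht.deathTime (p v) := by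
  obtain ⟨_, _, _, hpv', _⟩ := hbht.exists_deathEdge hv
  refine (hbht.isCompMin_self_iff hpv ?_).1 hpv'.self
  exact (hbht.pos_parent_le v).trans_lt ((hbht.pos_lt_deathTime hv).trans (Nat.lt_succ_self _))

theorem deathTime_le_of_anc (hbht : G.IsBHT f pos r p L) (h : Anc p v u) (hv : v ≠ r) :
    hbht.deathTime u ≤ hbht.deathTime v := by
  obtain ⟨n, rfl⟩ := h
  induction n generalizing u with
  | zero => exact le_rfl
  | succ n ih =>
    have hpu : p u ≠ r := hbht.ne_root_of_anc ⟨n, rfl⟩ hv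
    have hu : u ≠ r := hbht.ne_root_of_anc (Anc.parent p u) hpu
    exact (hbht.deathTime_lt_parent hu hpu).le.trans (ih hv)


theorem sig_maxEnd (hbht : G.IsBHT f pos r p L) (e : E) :
    f (G.maxEnd pos e) = G.sig f (.inr e) := by
  unfold SigGraph.maxEnd
  split_ifs with h
  · exact (max_eq_right (hbht.ordering.2.1 _ _ h)).symm
  · exact (max_eq_left (hbht.ordering.2.1 _ _ (le_of_not_ge h))).symm

theorem pos_maxEnd_lt (hbht : G.IsBHT f pos r p L) (e : E) :
    pos (.inl (G.maxEnd pos e)) < pos (.inr e) := by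
  unfold SigGraph.maxEnd
  split_ifs
  exacts [(hbht.ordering.2.2 e).2, (hbht.ordering.2.2 e).1]

theorem pos_link_lt_deathTime (hbht : G.IsBHT f pos r p L) (hv : v ≠ r) :
    pos (.inl (L v)) < hbht.deathTime v := by
  obtain ⟨e, he, -, -, hL⟩ := hbht.exists_deathEdge hv
  exact hL ▸ he ▸ hbht.pos_maxEnd_lt e

theorem le_link (hbht : G.IsBHT f pos r p L) (hv : v ≠ r) : f v ≤ f (L v) := by
  obtain ⟨e, he, -, -, hL⟩ := hbht.exists_deathEdge hv
  rw [hL, hbht.sig_maxEnd]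
  exact hbht.ordering.2.1 (.inl v) (.inr e) (he ▸ hbht.pos_lt_deathTime hv).le

theorem link_le_link (hbht : G.IsBHT f pos r p L) (hw : w ≠ r) (hv : v ≠ r)
    (h : hbht.deathTime w ≤ hbht.deathTime v) : f (L w) ≤ f (L v) := by
  obtain ⟨e, he, -, -, hL⟩ := hbht.exists_deathEdge hw
  obtain ⟨e', he', -, -, hL'⟩ := hbht.exists_deathEdge hv
  rw [hL, hL', hbht.sig_maxEnd, hbht.sig_maxEnd]
  exact hbht.ordering.2.1 _ _ (he ▸ he' ▸ h)

theorem link_le_link_of_anc (hbht : G.IsBHT f pos r p L) (h : Anc p v u) (hv : v ≠ r) :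
    f (L u) ≤ f (L v) :=
  hbht.link_le_link (hbht.ne_root_of_anc h hv) hv (hbht.deathTime_le_of_anc h hv)

theorem le_link_of_anc (hbht : G.IsBHT f pos r p L) (h : Anc p v u) (hv : v ≠ r) :
    f u ≤ f (L v) :=
  (hbht.le_link (hbht.ne_root_of_anc h hv)).trans (hbht.link_le_link_of_anc h hv)

/-- Once `x` is dead at time `k`, its component is that of `p x`, so induct towards the root. -/
theorem anc_and_forall_anc_of_isCompMin (hbht : G.IsBHT f pos r p L) (x : V) :
    ∀ k m, G.IsCompMin pos k m x →
      Anc p m x ∧ ∀ w, Anc p w x → G.IsCompMin pos k w w → Anc p w m := by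
  induction x using Anc.induction_from_root hbht.reaches with | step x ih => ?_
  intro k m hm
  by_cases halive : G.IsCompMin pos k x x
  · obtain rfl := hm.eq hbht.ordering.1 halive
    exact ⟨Anc.refl p m, fun w hw _ => hw⟩
  have hx : x ≠ r := by
    rintro rfl
    exact halive (hbht.isCompMin_root hm.1.2.1)
  have hdead : hbht.deathTime x < k := by
    by_contra! hk
    exact halive ((hbht.isCompMin_self_iff hx hm.1.2.1).2 hk)
  obtain ⟨_, _, _, hpx, _⟩ := hbht.exists_deathEdge hx
  obtain ⟨hm_anc, hm_below⟩ := ih hx k m (hm.of_connB (hpx.1.mono hdead).symm)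
  refine ⟨hm_anc.trans (Anc.parent p x), fun w hw hwa => hm_below w ?_ hwa⟩
  exact hw.anc_parent_of_ne fun hwx => halive (hwx ▸ hwa)

theorem anc_of_isCompMin (hbht : G.IsBHT f pos r p L) (hm : G.IsCompMin pos k m x) :
    Anc p m x :=
  (hbht.anc_and_forall_anc_of_isCompMin x k m hm).1

theorem anc_of_isCompMin_of_anc (hbht : G.IsBHT f pos r p L) (hm : G.IsCompMin pos k m x)
    (hw : Anc p w x) (hwa : G.IsCompMin pos k w w) : Anc p w m :=
  (hbht.anc_and_forall_anc_of_isCompMin x k m hm).2 w hw hwa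

/-- When the component of `v` dies at the edge `e`, one endpoint of `e` lies in it (otherwise
`v` would stay the minimum), so both endpoints, `L v` among them, join the component of `p v`. -/
theorem isCompMin_link (hbht : G.IsBHT f pos r p L) (hv : v ≠ r) :
    G.IsCompMin pos (hbht.deathTime v + 1) (p v) (L v) := by
  obtain ⟨e, he, hv_alive, hpv, hL⟩ := hbht.exists_deathEdge hv
  have hvt := hbht.pos_lt_deathTime hv
  have hsrc : G.ConnB pos (hbht.deathTime v + 1) v (G.src e) := by
    by_contra hnc
    refine hbht.not_isCompMin_deathTime_succ hv ⟨connB_refl (by omega), fun w hw => ?_⟩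
    rcases reflTransGen_adjB_succ hbht.ordering.1 he hw.2.2 with hs | hs
    · have hw' : pos (.inl w) < hbht.deathTime v :=
        lt_of_le_of_ne (Nat.lt_succ_iff.mp hw.2.1) fun h =>
          Sum.inl_ne_inr (hbht.ordering.1 (h.trans he.symm))
      exact hv_alive.2 w ⟨hvt, hw', hs⟩
    · exact (hnc ⟨by omega, he ▸ (hbht.ordering.2.2 e).1.trans (Nat.lt_succ_self _), hs⟩).elim
  have hsrc_tgt : G.ConnB pos (hbht.deathTime v + 1) (G.src e) (G.tgt e) :=
    ⟨hsrc.2.1, he ▸ (hbht.ordering.2.2 e).2.trans (Nat.lt_succ_self _),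
      .single ⟨e, he ▸ Nat.lt_succ_self _, .inl ⟨rfl, rfl⟩⟩⟩
  refine hpv.of_connB ?_
  rw [hL]
  unfold SigGraph.maxEnd
  split_ifs
  exacts [hsrc.trans hsrc_tgt, hsrc]

theorem parent_anc_link (hbht : G.IsBHT f pos r p L) (hv : v ≠ r) : Anc p (p v) (L v) :=
  hbht.anc_of_isCompMin (hbht.isCompMin_link hv)

theorem link_le_or_anc_parent (hbht : G.IsBHT f pos r p L) (hw : w ≠ r) (hv : v ≠ r)
    (h : Anc p w (L v)) : f (L w) ≤ f (L v) ∨ Anc p w (p v) := by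
  rcases le_or_gt (hbht.deathTime w) (hbht.deathTime v) with hle | hlt
  · exact .inl (hbht.link_le_link hw hv hle)
  · refine .inr (hbht.anc_of_isCompMin_of_anc (hbht.isCompMin_link hv) h ?_)
    refine (hbht.isCompMin_self_iff hw ?_).2 hlt
    exact (hbht.pos_le_of_anc h).trans_lt ((hbht.pos_link_lt_deathTime hv).trans (Nat.lt_succ_self _))

end SigGraph.IsBHT

/-- `𝓛^T f`, so that `𝓛₀^ε f = 𝓛^{V_ε} f`. -/
noncomputable def ancLinkMax {V : Type*} (f : V → ℝ) (p L : V → V) (T : Finset V) (u : V) : ℝ :=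
  (insert (f u) ((T.filter fun w => Anc p w u).image fun w => f (L w))).max'
    (insert_nonempty _ _)

section ancLinkMax

variable {V : Type*} {f : V → ℝ} {p L : V → V} {T : Finset V} {u w : V} {c : ℝ}

theorem ancLinkMax_le_iff :
    ancLinkMax f p L T u ≤ c ↔ f u ≤ c ∧ ∀ w ∈ T, Anc p w u → f (L w) ≤ c := by
  simp only [ancLinkMax, max'_le_iff, mem_insert, forall_eq_or_imp, forall_mem_image, mem_filter,
    and_imp]

theorem le_ancLinkMax : f u ≤ ancLinkMax f p L T u :=
  (ancLinkMax_le_iff.1 le_rfl).1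

theorem link_le_ancLinkMax (hw : w ∈ T) (h : Anc p w u) : f (L w) ≤ ancLinkMax f p L T u :=
  (ancLinkMax_le_iff.1 le_rfl).2 w hw h

theorem ancLinkMax_empty (f : V → ℝ) (p L : V → V) : ancLinkMax f p L ∅ = f := by
  funext u
  simp [ancLinkMax]

theorem ancLinkMax_insert_of_not_anc {v : V} (h : ¬ Anc p v u) :
    ancLinkMax f p L (insert v T) u = ancLinkMax f p L T u := by
  simp only [ancLinkMax, filter_insert, if_neg h]

end ancLinkMax

namespace SigGraph.IsBHT

variable {V E : Type*} {G : SigGraph V E} {f : V → ℝ} {pos : V ⊕ E → ℕ} {r : V} {p L : V → V}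
  {T : Finset V} {v : V}

theorem fill_ancLinkMax (hbht : G.IsBHT f pos r p L) (hT : r ∉ T) (hv : v ≠ r) :
    fill p L (ancLinkMax f p L T) v = ancLinkMax f p L (insert v T) := by
  funext u
  by_cases hvu : Anc p v u
  swap
  · simp only [fill, if_neg hvu, ancLinkMax_insert_of_not_anc hvu]
  simp only [fill, if_pos hvu]
  refine le_antisymm (ancLinkMax_le_iff.2 ⟨link_le_ancLinkMax (mem_insert_self v T) hvu,
    fun w hw hwL => ?_⟩) (ancLinkMax_le_iff.2 ⟨(hbht.le_link_of_anc hvu hv).trans le_ancLinkMax,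
    fun w hw hwu => ?_⟩)
  · rcases hbht.link_le_or_anc_parent (ne_of_mem_of_not_mem hw hT) hv hwL with hle | hanc
    · exact hle.trans (link_le_ancLinkMax (mem_insert_self v T) hvu)
    · exact link_le_ancLinkMax (mem_insert_of_mem hw) (hanc.trans ((Anc.parent p v).trans hvu))
  · rcases eq_or_ne w v with rfl | hwv
    · exact le_ancLinkMax
    rcases hwu.total_of_anc hvu with hwv' | hvw
    · have hwT : w ∈ T := (mem_insert.1 hw).resolve_left hwv
      exact link_le_ancLinkMax hwT ((hwv'.anc_parent_of_ne hwv).trans (hbht.parent_anc_link hv))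
    · exact (hbht.link_le_link_of_anc hvw hv).trans le_ancLinkMax

theorem foldl_fill_ancLinkMax (hbht : G.IsBHT f pos r p L) :
    ∀ (l : List V) {T : Finset V}, r ∉ T → r ∉ l →
      l.foldl (fill p L) (ancLinkMax f p L T) = ancLinkMax f p L (T ∪ l.toFinset)
  | [], _, _, _ => by simp
  | v :: l, T, hT, hl => by
    obtain ⟨hrv, hl⟩ := List.ne_and_not_mem_of_not_mem_cons hl
    have hT' : r ∉ insert v T := by simp [hT, hrv]
    rw [List.foldl_cons, hbht.fill_ancLinkMax hT (Ne.symm hrv),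
      foldl_fill_ancLinkMax hbht l hT' hl, List.toFinset_cons, insert_union, union_insert]

end SigGraph.IsBHT

theorem persBHT_root {V : Type*} (f : V → ℝ) (r : V) (L : V → V) : persBHT f r L r = ⊤ := by
  simp [persBHT, fLink]

theorem lpf_eq_ancLinkMax {V : Type*} [Fintype V] (f : V → ℝ) (r : V) (p L : V → V) (ε : ℝ) :
    LPF f r p L ε = ancLinkMax f p L (univ.filter fun u => persBHT f r L u < ε) := by
  funext v
  simp only [LPF, ancLinkMax, filter_filter, and_comm]

theorem lpf_eq_fold_fill_general {V E : Type*} [Fintype V]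
    (G : SigGraph V E) (f : V → ℝ) (pos : V ⊕ E → ℕ)
    (r : V) (p L : V → V) (hbht : G.IsBHT f pos r p L)
    (ε : ℝ)
    (l : List V)
    (hmem : ∀ u : V, u ∈ l ↔ persBHT f r L u < (ε : EReal)) :
    l.foldl (fill p L) f = LPF f r p L ε := by
  have hr : r ∉ l := fun h => by simpa [persBHT_root] using (hmem r).1 h
  calc l.foldl (fill p L) f = l.foldl (fill p L) (ancLinkMax f p L ∅) := by
        rw [ancLinkMax_empty]
    _ = ancLinkMax f p L l.toFinset := by
        rw [hbht.foldl_fill_ancLinkMax l (notMem_empty r) hr, empty_union]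
    _ = LPF f r p L ε := by
        rw [lpf_eq_ancLinkMax]
        congr
        ext u
        simp [hmem]

/-- The low-persistence filter is the composite of the basin-filling operations
over the vertices of persistence `< ε`, in any order: for every enumeration `l`
of `V_ε = {v : pers(v) < ε}`, folding the filling operations along `l` starting
from `f` yields `𝓛₀^ε f`. -/
theorem lpf_eq_fold_fill {V E : Type*} [Fintype V] [Fintype E]
    (G : SigGraph V E) (hG : G.Connected) (f : V → ℝ) (pos : V ⊕ E → ℕ)
    (r : V) (p L : V → V) (hbht : G.IsBHT f pos r p L)
    (ε : ℝ) (hε : 0 < ε)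
    (l : List V) (hnd : l.Nodup)
    (hmem : ∀ u : V, u ∈ l ↔ persBHT f r L u < (ε : EReal)) :
    l.foldl (fill p L) f = LPF f r p L ε :=
  lpf_eq_fold_fill_general G f pos r p L hbht ε l hmem
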